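/- arXiv:2510.22157 — 4 statements merged into one kernel-verified Lean document; each statement's English description precedes it below -/
import Mathlib

section
/- For all p, q ∈ {1,…,d} with p ≠ q, the covariance of the p-th and q-th entries of the diagonal estimator equals Cov(y_p, y_q) = Σ a_{j_1,…,j_{N−1},p} · a_{k_1,…,k_{N−1},q} − a_{p,…,p} · a_{q,…,q}, where the sum ranges over all pairs of tuples (j_1,…,j_{N−1}) and (k_1,…,k_{N−1}) such that every j_t and every k_t lies in {p,q} and j_t ≠ k_t for all t ∈ {1,…,N−1}. -/
open MeasureTheory ProbabilityTheory Finset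

/-! Expanding `y_p y_q` and using independence, every term is a product of moments of the
`g t r`, one per pair `(t, r)`, with exponent the multiplicity of `g t r` in the monomial. Such a
product is `1` when all multiplicities are `0` or `2` and vanishes as soon as one of them is `1`
(a lone factor of mean zero). With `p ≠ q` the surviving terms of `E[y_p y_q]` are exactly those
with `{j_t, k_t} = {p, q}` for every `t`, while `E[y_i] = a_{i,…,i}`. -/

/-- The diagonal estimator: `y i = Σ_j a_{j_1,…,j_{N-1},i} ∏_t g^{(t)}_{j_t} g^{(t)}_i`,
where the tensor has order `N = M + 1`. -/
noncomputable def diagEstimator {M d : ℕ} (a : (Fin (M + 1) → Fin d) → ℝ)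
    {Ω : Type*} (g : Fin M → Fin d → Ω → ℝ) (i : Fin d) (ω : Ω) : ℝ :=
  ∑ j : Fin M → Fin d, a (Fin.snoc j i) * ∏ t : Fin M, g t (j t) ω * g t i ω

section Moments

variable {Ω ι : Type*} [MeasurableSpace Ω] {μ : Measure Ω}

lemma integrable_pow_of_le [IsFiniteMeasure μ] {f : Ω → ℝ} (hf : AEStronglyMeasurable f μ)
    {m n : ℕ} (hmn : m ≤ n) (hn : Even n) (hint : Integrable (fun ω => f ω ^ n) μ) :
    Integrable (fun ω => f ω ^ m) μ := by
  have hnorm : Integrable (fun ω => ‖f ω‖ ^ m) μ :=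
    integrable_norm_pow_of_le hf hmn (by simpa [Real.norm_eq_abs, hn.pow_abs] using hint)
  exact (integrable_norm_iff (hf.pow m)).1 (by simpa only [Pi.pow_apply, norm_pow] using hnorm)

namespace ProbabilityTheory

lemma iIndepFun.integrable_fun_finset_prod {X : ι → Ω → ℝ} (hX : iIndepFun X μ)
    (hmeas : ∀ i, Measurable (X i)) (hint : ∀ i, Integrable (X i) μ) (s : Finset ι) :
    Integrable (fun ω => ∏ i ∈ s, X i ω) μ := by
  have := hX.isProbabilityMeasure
  induction s using Finset.cons_induction with
  | empty => simp
  | cons i s hi ih =>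
    have hind := hX.indepFun_finsetProd_of_notMem hmeas hi
    have hprod : (fun ω => ∏ j ∈ cons i s hi, X j ω) = (∏ j ∈ s, X j) * X i := by
      ext ω; simp [prod_cons, mul_comm]
    rw [hprod]
    exact hind.integrable_mul (by simpa only [← Finset.prod_apply] using ih) (hint i)

variable [Fintype ι] {X : ι → Ω → ℝ}

lemma iIndepFun.integral_fun_prod_pow (hX : iIndepFun X μ) (hmeas : ∀ i, Measurable (X i))
    (e : ι → ℕ) : ∫ ω, ∏ i, X i ω ^ e i ∂μ = ∏ i, ∫ ω, X i ω ^ e i ∂μ :=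
  hX.integral_fun_prod_comp (fun i => (hmeas i).aemeasurable)
    (fun i => (continuous_pow (e i)).aestronglyMeasurable)

lemma iIndepFun.integral_sum_mul_prod_pow {κ : Type*} (hX : iIndepFun X μ)
    (hmeas : ∀ i, Measurable (X i)) (hmean : ∀ i, ∫ ω, X i ω ∂μ = 0)
    (hsecond : ∀ i, ∫ ω, X i ω ^ 2 ∂μ = 1) (hfourth : ∀ i, Integrable (fun ω => X i ω ^ 4) μ)
    (s : Finset κ) (c : κ → ℝ) (e : κ → ι → ℕ) (he : ∀ k i, e k i ≤ 4)
    (P : κ → Prop) [DecidablePred P] (hP : ∀ k, P k → ∀ i, e k i = 0 ∨ e k i = 2)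
    (hnP : ∀ k, ¬ P k → ∃ i, e k i = 1) :
    ∫ ω, ∑ k ∈ s, c k * ∏ i, X i ω ^ e k i ∂μ = ∑ k ∈ s with P k, c k := by
  have := hX.isProbabilityMeasure
  have hpow : ∀ k, iIndepFun (fun i ω => X i ω ^ e k i) μ := fun k =>
    hX.comp (fun i x => x ^ e k i) (fun i => measurable_id.pow_const _)
  have hint : ∀ k, Integrable (fun ω => ∏ i, X i ω ^ e k i) μ := fun k =>
    (hpow k).integrable_fun_finset_prod (fun i => (hmeas i).pow_const _)
      (fun i => integrable_pow_of_le (hmeas i).aestronglyMeasurable (he k i) ⟨2, rfl⟩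
        (hfourth i)) univ
  have hmoment : ∀ k, ∫ ω, ∏ i, X i ω ^ e k i ∂μ = if P k then 1 else 0 := by
    intro k
    rw [hX.integral_fun_prod_pow hmeas]
    split_ifs with hk
    · refine prod_eq_one fun i _ => ?_
      rcases hP k hk i with h | h <;> simp [h, hsecond]
    · obtain ⟨i, hi⟩ := hnP k hk
      exact prod_eq_zero (mem_univ i) (by simp [hi, hmean])
  rw [integral_finsetSum _ fun k _ => (hint k).const_mul (c k), sum_filter]
  simp_rw [integral_const_mul, hmoment, mul_ite, mul_one, mul_zero]

end ProbabilityTheory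

end Moments

section Exponents

variable {τ α : Type*} [DecidableEq α]

def diagExponent (j : τ → α) (i : α) (x : τ × α) : ℕ :=
  (if j x.1 = x.2 then 1 else 0) + (if i = x.2 then 1 else 0)

lemma diagExponent_le_two (j : τ → α) (i : α) (x : τ × α) : diagExponent j i x ≤ 2 := by
  unfold diagExponent; split_ifs <;> norm_num

lemma prod_mul_eq_prod_pow_diagExponent [Fintype τ] [Fintype α] {R : Type*} [CommMonoid R]
    (g : τ → α → R) (j : τ → α) (i : α) :
    ∏ t, g t (j t) * g t i = ∏ x : τ × α, g x.1 x.2 ^ diagExponent j i x := by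
  rw [Fintype.prod_prod_type]
  refine prod_congr rfl fun t _ => ?_
  simp only [diagExponent, pow_add, prod_mul_distrib, pow_boole, prod_ite_eq, mem_univ, if_true]

lemma diagExponent_const (i : α) (x : τ × α) :
    diagExponent (fun _ => i) i x = 0 ∨ diagExponent (fun _ => i) i x = 2 := by
  unfold diagExponent; split_ifs <;> simp

lemma exists_diagExponent_eq_one {j : τ → α} {i : α} (hj : j ≠ fun _ => i) :
    ∃ x, diagExponent j i x = 1 := by
  obtain ⟨t, ht⟩ := Function.ne_iff.1 hj
  exact ⟨(t, j t), by simp [diagExponent, Ne.symm ht]⟩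

variable {p q : α}

lemma diagExponent_add_eq_zero_or_two (hpq : p ≠ q) {j k : τ → α}
    (hjk : ∀ t, (j t = p ∨ j t = q) ∧ (k t = p ∨ k t = q) ∧ j t ≠ k t) (x : τ × α) :
    diagExponent j p x + diagExponent k q x = 0 ∨
      diagExponent j p x + diagExponent k q x = 2 := by
  obtain ⟨hj, hk, hne⟩ := hjk x.1
  unfold diagExponent
  split_ifs <;> grind

lemma exists_diagExponent_add_eq_one (hpq : p ≠ q) {j k : τ → α}
    (hjk : ¬ ∀ t, (j t = p ∨ j t = q) ∧ (k t = p ∨ k t = q) ∧ j t ≠ k t) :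
    ∃ x, diagExponent j p x + diagExponent k q x = 1 := by
  push Not at hjk
  obtain ⟨t, ht⟩ := hjk
  have : ∃ r, (if j t = r then 1 else 0) + (if p = r then 1 else 0) +
      ((if k t = r then 1 else 0) + (if q = r then 1 else 0)) = 1 := by
    by_cases hjp : j t = p
    · exact ⟨q, by grind⟩
    by_cases hjq : j t = q
    · exact ⟨p, by grind⟩
    by_cases hkj : k t = j t
    · exact ⟨p, by grind⟩
    · exact ⟨j t, by grind⟩
  obtain ⟨r, hr⟩ := this
  exact ⟨(t, r), hr⟩

end Exponents

section Estimator

variable {M d : ℕ} (a : (Fin (M + 1) → Fin d) → ℝ) {Ω : Type*} (g : Fin M → Fin d → Ω → ℝ)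

lemma diagEstimator_eq_sum_mul_prod_pow (i : Fin d) (ω : Ω) :
    diagEstimator a g i ω =
      ∑ j, a (Fin.snoc j i) * ∏ x : Fin M × Fin d, g x.1 x.2 ω ^ diagExponent j i x := by
  simp only [diagEstimator, prod_mul_eq_prod_pow_diagExponent (fun t r => g t r ω)]

lemma diagEstimator_mul_eq_sum_mul_prod_pow (p q : Fin d) (ω : Ω) :
    diagEstimator a g p ω * diagEstimator a g q ω =
      ∑ jk : (Fin M → Fin d) × (Fin M → Fin d), a (Fin.snoc jk.1 p) * a (Fin.snoc jk.2 q) *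
        ∏ x : Fin M × Fin d, g x.1 x.2 ω ^ (diagExponent jk.1 p x + diagExponent jk.2 q x) := by
  simp_rw [diagEstimator_eq_sum_mul_prod_pow, sum_mul_sum, ← univ_product_univ, sum_product,
    pow_add, prod_mul_distrib, mul_mul_mul_comm]

variable [MeasureSpace Ω] {g}

lemma integral_diagEstimator (hmeas : ∀ n i, Measurable (g n i))
    (hindep : iIndepFun (fun p : Fin M × Fin d => g p.1 p.2) ℙ)
    (hmean : ∀ n i, ∫ ω, g n i ω ∂ℙ = 0) (hsecond : ∀ n i, ∫ ω, (g n i ω) ^ 2 ∂ℙ = 1)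
    (hfourth : ∀ n i, Integrable (fun ω => (g n i ω) ^ 4) ℙ) (i : Fin d) :
    ∫ ω, diagEstimator a g i ω ∂ℙ = a (fun _ => i) := by
  simp_rw [diagEstimator_eq_sum_mul_prod_pow]
  rw [hindep.integral_sum_mul_prod_pow (fun x => hmeas x.1 x.2) (fun x => hmean x.1 x.2)
      (fun x => hsecond x.1 x.2) (fun x => hfourth x.1 x.2) univ _ (fun j => diagExponent j i)
      (fun j x => (diagExponent_le_two j i x).trans (by norm_num)) (· = fun _ => i)
      (by rintro j rfl; exact diagExponent_const i) (fun j => exists_diagExponent_eq_one)]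
  simp only [filter_eq', mem_univ, if_true, sum_singleton]
  exact congrArg a (Fin.snoc_init_self (fun _ : Fin (M + 1) => i))

lemma integral_diagEstimator_mul (hmeas : ∀ n i, Measurable (g n i))
    (hindep : iIndepFun (fun p : Fin M × Fin d => g p.1 p.2) ℙ)
    (hmean : ∀ n i, ∫ ω, g n i ω ∂ℙ = 0) (hsecond : ∀ n i, ∫ ω, (g n i ω) ^ 2 ∂ℙ = 1)
    (hfourth : ∀ n i, Integrable (fun ω => (g n i ω) ^ 4) ℙ) {p q : Fin d} (hpq : p ≠ q) :
    ∫ ω, diagEstimator a g p ω * diagEstimator a g q ω ∂ℙ =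
      ∑ jk ∈ univ.filter (fun jk : (Fin M → Fin d) × (Fin M → Fin d) =>
          ∀ t, (jk.1 t = p ∨ jk.1 t = q) ∧ (jk.2 t = p ∨ jk.2 t = q) ∧ jk.1 t ≠ jk.2 t),
        a (Fin.snoc jk.1 p) * a (Fin.snoc jk.2 q) := by
  simp_rw [diagEstimator_mul_eq_sum_mul_prod_pow]
  refine hindep.integral_sum_mul_prod_pow (fun x => hmeas x.1 x.2) (fun x => hmean x.1 x.2)
    (fun x => hsecond x.1 x.2) (fun x => hfourth x.1 x.2) univ _ _ (fun jk x => ?_) _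
    (fun jk => diagExponent_add_eq_zero_or_two hpq) (fun jk => exists_diagExponent_add_eq_one hpq)
  have := diagExponent_le_two jk.1 p x
  have := diagExponent_le_two jk.2 q x
  omega

end Estimator

theorem diag_estimator_covariance_general
    {M d : ℕ}
    (a : (Fin (M + 1) → Fin d) → ℝ)
    {Ω : Type*} [MeasureSpace Ω]
    (g : Fin M → Fin d → Ω → ℝ)
    (hmeas : ∀ n i, Measurable (g n i))
    (hindep : iIndepFun (fun p : Fin M × Fin d => g p.1 p.2) ℙ)
    (hmean : ∀ n i, ∫ ω, g n i ω ∂ℙ = 0)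
    (hsecond : ∀ n i, ∫ ω, (g n i ω) ^ 2 ∂ℙ = 1)
    (hfourth : ∀ n i, Integrable (fun ω => (g n i ω) ^ 4) ℙ)
    (p q : Fin d) (hpq : p ≠ q) :
    (∫ ω, diagEstimator a g p ω * diagEstimator a g q ω ∂ℙ) -
      (∫ ω, diagEstimator a g p ω ∂ℙ) * (∫ ω, diagEstimator a g q ω ∂ℙ) =
    (∑ jk ∈ Finset.univ.filter (fun jk : (Fin M → Fin d) × (Fin M → Fin d) =>
          ∀ t, (jk.1 t = p ∨ jk.1 t = q) ∧ (jk.2 t = p ∨ jk.2 t = q) ∧ jk.1 t ≠ jk.2 t),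
        a (Fin.snoc jk.1 p) * a (Fin.snoc jk.2 q)) -
      a (fun _ => p) * a (fun _ => q) := by
  rw [integral_diagEstimator_mul a hmeas hindep hmean hsecond hfourth hpq,
    integral_diagEstimator a hmeas hindep hmean hsecond hfourth p,
    integral_diagEstimator a hmeas hindep hmean hsecond hfourth q]

theorem diag_estimator_covariance
    {M d : ℕ} (hM : 1 ≤ M) (hd : 1 ≤ d)
    (a : (Fin (M + 1) → Fin d) → ℝ)
    {Ω : Type*} [MeasureSpace Ω] [IsProbabilityMeasure (ℙ : Measure Ω)]
    (g : Fin M → Fin d → Ω → ℝ)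
    (hmeas : ∀ n i, Measurable (g n i))
    (hindep : iIndepFun (fun p : Fin M × Fin d => g p.1 p.2) ℙ)
    (hident : ∀ n i n' i', IdentDistrib (g n i) (g n' i') ℙ ℙ)
    (hmean : ∀ n i, ∫ ω, g n i ω ∂ℙ = 0)
    (hsecond : ∀ n i, ∫ ω, (g n i ω) ^ 2 ∂ℙ = 1)
    (hfourth : ∀ n i, Integrable (fun ω => (g n i ω) ^ 4) ℙ)
    (p q : Fin d) (hpq : p ≠ q) :
    (∫ ω, diagEstimator a g p ω * diagEstimator a g q ω ∂ℙ) -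
      (∫ ω, diagEstimator a g p ω ∂ℙ) * (∫ ω, diagEstimator a g q ω ∂ℙ) =
    (∑ jk ∈ Finset.univ.filter (fun jk : (Fin M → Fin d) × (Fin M → Fin d) =>
          ∀ t, (jk.1 t = p ∨ jk.1 t = q) ∧ (jk.2 t = p ∨ jk.2 t = q) ∧ jk.1 t ≠ jk.2 t),
        a (Fin.snoc jk.1 p) * a (Fin.snoc jk.2 q)) -
      a (fun _ => p) * a (fun _ => q) :=
  diag_estimator_covariance_general a g hmeas hindep hmean hsecond hfourth p q hpq
end

section
/- If the entries g^{(n)}_i are i.i.d. standard Gaussian N(0,1), then for every i ∈ {1,…,d} the variance of the i-th entry of the diagonal estimator equals Var(y_i) = Σ_{s=0}^{N−1} 3^s · ( Σ a²_{j_1,…,j_{N−1},i} ) − a²_{i,…,i}, where for each s the inner sum ranges over all tuples (j_1,…,j_{N−1}) ∈ {1,…,d}^{N−1} in which exactly s of the indices j_1,…,j_{N−1} are equal to i. -/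
/-!
Write `y_i = ∑_j a_{j,i} X_j` with `X_j = ∏_t g⁽ᵗ⁾_{j_t} g⁽ᵗ⁾_i`. Each `X_j` and each `X_j X_k`
is a monomial in the independent standard Gaussians `g⁽ᵗ⁾_m`, so its expectation is a product
of moments `E[Z^n]`, the derivatives at `0` of the moment generating function `exp (t^2/2)`.
Row by row, `E[g_a g_i] = [a = i]` and `E[g_a g_i g_b g_i] = [a = b] (3 if a = i else 1)`, so
`E[X_j] = [j ≡ i]` and the `X_j` are orthogonal with `E[X_j^2] = 3^#{t | j_t = i}`. Hence
`E[y_i] = a_{i,…,i}` and `E[y_i^2] = ∑_j a_{j,i}^2 3^#{t | j_t = i}`; grouping the `j` by the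
number `s` of their indices equal to `i` gives the formula.
-/

open MeasureTheory ProbabilityTheory Finset

open Polynomial Real

/-- `(d/dt)^n exp (t^2/2) = gaussianMgfPoly n t * exp (t^2/2)`. -/
noncomputable def gaussianMgfPoly : ℕ → ℝ[X]
  | 0 => 1
  | n + 1 => derivative (gaussianMgfPoly n) + X * gaussianMgfPoly n

lemma deriv_eval_mul_exp_sq_div_two (p : ℝ[X]) :
    deriv (fun t => p.eval t * rexp (t ^ 2 / 2))
      = fun t => (derivative p + X * p).eval t * rexp (t ^ 2 / 2) := by
  funext t
  have hexp : HasDerivAt (fun t => rexp (t ^ 2 / 2)) (t * rexp (t ^ 2 / 2)) t := by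
    convert ((hasDerivAt_pow 2 t).div_const 2).exp using 1
    ring
  rw [((p.hasDerivAt t).fun_mul hexp).deriv]
  simp only [eval_add, eval_mul, eval_X]
  ring

lemma iteratedDeriv_exp_sq_div_two (n : ℕ) :
    iteratedDeriv n (fun t => rexp (t ^ 2 / 2))
      = fun t => (gaussianMgfPoly n).eval t * rexp (t ^ 2 / 2) := by
  induction n with
  | zero => simp [gaussianMgfPoly]
  | succ n ih => rw [iteratedDeriv_succ, ih, deriv_eval_mul_exp_sq_div_two, gaussianMgfPoly]

lemma integral_pow_gaussianReal (n : ℕ) :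
    ∫ x, x ^ n ∂gaussianReal 0 1 = (gaussianMgfPoly n).eval 0 := by
  have h := iteratedDeriv_mgf_zero (X := fun x => x) (μ := gaussianReal 0 1) (by simp) n
  simpa [mgf_fun_id_gaussianReal, iteratedDeriv_exp_sq_div_two] using h.symm

lemma integral_sq_gaussianReal : ∫ x, x ^ 2 ∂gaussianReal 0 1 = 1 := by
  simp [integral_pow_gaussianReal, gaussianMgfPoly]

lemma integral_pow_four_gaussianReal : ∫ x, x ^ 4 ∂gaussianReal 0 1 = 3 := by
  simp [integral_pow_gaussianReal, gaussianMgfPoly]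
  norm_num

lemma integrable_pow_gaussianReal (n : ℕ) : Integrable (fun x => x ^ n) (gaussianReal 0 1) :=
  (memLp_id_gaussianReal n).integrable_norm_pow'.mono' (by fun_prop)
    (ae_of_all _ fun x => (norm_pow x n).le)

section GaussianRow

variable {ι : Type*} [Fintype ι] [DecidableEq ι]

lemma prod_integral_pow_gaussianReal_single (a i : ι) :
    ∏ m, ∫ x, x ^ ((if a = m then 1 else 0) + (if i = m then 1 else 0)) ∂gaussianReal 0 1
      = if a = i then 1 else 0 := by
  split_ifs with hai
  · subst hai
    refine Finset.prod_eq_one fun m _ => ?_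
    split_ifs <;> simp [integral_sq_gaussianReal]
  · refine Finset.prod_eq_zero (Finset.mem_univ a) ?_
    simp [Ne.symm hai]

lemma prod_integral_pow_gaussianReal_pair (a b i : ι) :
    ∏ m, ∫ x, x ^ ((if a = m then 1 else 0) + (if i = m then 1 else 0) +
        ((if b = m then 1 else 0) + (if i = m then 1 else 0))) ∂gaussianReal 0 1
      = if a = b then (if a = i then 3 else 1) else 0 := by
  split_ifs with hab hai
  · subst hab hai
    rw [Fintype.prod_eq_single a fun m hm => by simp [Ne.symm hm]]
    simp [integral_pow_four_gaussianReal]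
  · subst hab
    refine Finset.prod_eq_one fun m _ => ?_
    by_cases ham : a = m <;> by_cases him : i = m <;> simp_all [integral_sq_gaussianReal]
  · obtain ⟨c, hc⟩ : ∃ c, (if a = c then 1 else 0) + (if i = c then 1 else 0) +
        ((if b = c then 1 else 0) + (if i = c then 1 else 0)) = 1 := by
      by_cases hai : a = i
      · subst hai
        exact ⟨b, by simp [hab]⟩
      · exact ⟨a, by simp [Ne.symm hai, Ne.symm hab]⟩
    refine Finset.prod_eq_zero (Finset.mem_univ c) ?_
    simp [hc]

end GaussianRow

lemma ProbabilityTheory.iIndepFun.integrable_fun_prod_comp {Ω ι : Type*}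
    {mΩ : MeasurableSpace Ω} {μ : Measure Ω} [Fintype ι] {𝓧 : ι → Type*}
    {m𝓧 : ∀ i, MeasurableSpace (𝓧 i)} {X : (i : ι) → Ω → 𝓧 i} {f : (i : ι) → 𝓧 i → ℝ}
    (hX : iIndepFun X μ) (mX : ∀ i, AEMeasurable (X i) μ)
    (hf : ∀ i, Integrable (f i) (μ.map (X i))) :
    Integrable (fun ω => ∏ i, f i (X i ω)) μ := by
  have := hX.isProbabilityMeasure
  have hint :
      Integrable (fun x : (i : ι) → 𝓧 i => ∏ i, f i (x i)) (μ.map fun ω i => X i ω) := by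
    rw [hX.map_fun_eq_pi_map mX]
    exact Integrable.fintype_prod_dep hf
  exact hint.comp_aemeasurable (aemeasurable_pi_lambda _ mX)

section StandardGaussianFamily

variable {Ω ι : Type*} {mΩ : MeasurableSpace Ω} {μ : Measure Ω} [Fintype ι] {X : ι → Ω → ℝ}
  (hX : iIndepFun X μ) (mX : ∀ i, AEMeasurable (X i) μ)
  (hlaw : ∀ i, μ.map (X i) = gaussianReal 0 1)
include hX mX hlaw

lemma integrable_prod_pow_of_iIndepFun_gaussian (e : ι → ℕ) :
    Integrable (fun ω => ∏ i, X i ω ^ e i) μ :=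
  hX.integrable_fun_prod_comp (f := fun i x => x ^ e i) mX
    fun i => hlaw i ▸ integrable_pow_gaussianReal (e i)

lemma integral_prod_pow_of_iIndepFun_gaussian (e : ι → ℕ) :
    ∫ ω, ∏ i, X i ω ^ e i ∂μ = ∏ i, ∫ x, x ^ e i ∂gaussianReal 0 1 := by
  rw [hX.integral_fun_prod_comp (f := fun i x => x ^ e i) mX fun i => by fun_prop]
  refine Finset.prod_congr rfl fun i _ => ?_
  rw [← hlaw i, integral_map (mX i) (by fun_prop)]

end StandardGaussianFamily

lemma integral_sq_sum_eq_of_integral_mul_eq_ite {Ω J : Type*} {mΩ : MeasurableSpace Ω}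
    {μ : Measure Ω} [Fintype J] [DecidableEq J] (c : J → ℝ) (X : J → Ω → ℝ) (w : J → ℝ)
    (hint : ∀ j k, Integrable (fun ω => X j ω * X k ω) μ)
    (horth : ∀ j k, ∫ ω, X j ω * X k ω ∂μ = if j = k then w j else 0) :
    ∫ ω, (∑ j, c j * X j ω) ^ 2 ∂μ = ∑ j, c j ^ 2 * w j := by
  have hexpand : ∀ ω, (∑ j, c j * X j ω) ^ 2 = ∑ j, ∑ k, c j * c k * (X j ω * X k ω) := by
    intro ω
    simp only [sq, sum_mul_sum]
    exact sum_congr rfl fun j _ => sum_congr rfl fun k _ => by ring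
  simp_rw [hexpand]
  rw [integral_finsetSum _ fun j _ => integrable_finsetSum _ fun k _ => (hint j k).const_mul _]
  refine sum_congr rfl fun j _ => ?_
  rw [integral_finsetSum _ fun k _ => (hint j k).const_mul _]
  simp [integral_const_mul, horth, sq]

lemma sum_mul_pow_eq_sum_range_pow_mul_sum_fiber {J : Type*} [Fintype J] (f : J → ℝ)
    (c : J → ℕ) (r : ℝ) {N : ℕ} (hc : ∀ j, c j ≤ N) :
    ∑ j, f j * r ^ c j = ∑ s ∈ range (N + 1), r ^ s * ∑ j with c j = s, f j := by
  rw [← sum_fiberwise_of_maps_to fun j _ => mem_range.2 (Nat.lt_succ_of_le (hc j))]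
  refine sum_congr rfl fun s _ => ?_
  rw [mul_sum]
  refine sum_congr rfl fun j hj => ?_
  rw [(mem_filter.1 hj).2, mul_comm]

lemma Fin.snoc_const {n : ℕ} {α : Type*} (x : α) :
    (Fin.snoc (fun _ => x) x : Fin (n + 1) → α) = fun _ => x := by
  funext t
  induction t using Fin.lastCases <;> simp

section DiagMonomial

variable {Ω κ ι : Type*} [Fintype κ] [Fintype ι] [DecidableEq ι]

def graphIndicator (j : κ → ι) (p : κ × ι) : ℕ := if j p.1 = p.2 then 1 else 0

lemma prod_apply_eq_prod_pow_graphIndicator {R : Type*} [CommMonoid R] (x : κ → ι → R)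
    (j : κ → ι) : ∏ t, x t (j t) = ∏ p : κ × ι, x p.1 p.2 ^ graphIndicator j p := by
  rw [Fintype.prod_prod_type]
  refine Finset.prod_congr rfl fun t _ => ?_
  simp [graphIndicator, pow_ite]

def diagMonomial (g : κ → ι → Ω → ℝ) (j : κ → ι) (i : ι) (ω : Ω) : ℝ :=
  ∏ t, g t (j t) ω * g t i ω

lemma diagMonomial_eq_prod_pow (g : κ → ι → Ω → ℝ) (j : κ → ι) (i : ι) (ω : Ω) :
    diagMonomial g j i ω
      = ∏ p : κ × ι, g p.1 p.2 ω ^ (graphIndicator j p + graphIndicator (fun _ => i) p) := by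
  simp only [diagMonomial, prod_mul_distrib, pow_add,
    prod_apply_eq_prod_pow_graphIndicator (fun t m => g t m ω)]

end DiagMonomial

section GaussianDiagMonomial

variable {Ω κ ι : Type*} {mΩ : MeasurableSpace Ω} {μ : Measure Ω} [Fintype κ] [Fintype ι]
  [DecidableEq ι] {g : κ → ι → Ω → ℝ}
  (hg : iIndepFun (fun p : κ × ι => g p.1 p.2) μ) (mg : ∀ t m, AEMeasurable (g t m) μ)
  (hlaw : ∀ t m, μ.map (g t m) = gaussianReal 0 1)
include hg mg hlaw

lemma integrable_diagMonomial_mul (j k : κ → ι) (i : ι) :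
    Integrable (fun ω => diagMonomial g j i ω * diagMonomial g k i ω) μ := by
  simp_rw [diagMonomial_eq_prod_pow, ← prod_mul_distrib, ← pow_add]
  exact integrable_prod_pow_of_iIndepFun_gaussian hg (fun p => mg p.1 p.2)
    (fun p => hlaw p.1 p.2) _

lemma memLp_diagMonomial (j : κ → ι) (i : ι) : MemLp (diagMonomial g j i) 2 μ := by
  have : AEMeasurable (diagMonomial g j i) μ := by unfold diagMonomial; fun_prop
  rw [memLp_two_iff_integrable_sq this.aestronglyMeasurable]
  simpa [sq] using integrable_diagMonomial_mul hg mg hlaw j j i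

lemma integral_diagMonomial (j : κ → ι) (i : ι) :
    ∫ ω, diagMonomial g j i ω ∂μ = if j = fun _ => i then 1 else 0 := by
  simp_rw [diagMonomial_eq_prod_pow]
  rw [integral_prod_pow_of_iIndepFun_gaussian hg (fun p => mg p.1 p.2)
    (fun p => hlaw p.1 p.2), Fintype.prod_prod_type]
  simp only [graphIndicator, prod_integral_pow_gaussianReal_single, Fintype.prod_ite_zero,
    funext_iff, prod_const_one]

lemma integral_diagMonomial_mul (j k : κ → ι) (i : ι) :
    ∫ ω, diagMonomial g j i ω * diagMonomial g k i ω ∂μ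
      = if j = k then 3 ^ #{t | j t = i} else 0 := by
  simp_rw [diagMonomial_eq_prod_pow, ← prod_mul_distrib, ← pow_add]
  rw [integral_prod_pow_of_iIndepFun_gaussian hg (fun p => mg p.1 p.2)
    (fun p => hlaw p.1 p.2), Fintype.prod_prod_type]
  simp only [graphIndicator, prod_integral_pow_gaussianReal_pair, Fintype.prod_ite_zero,
    funext_iff]
  simp [Finset.prod_ite]

end GaussianDiagMonomial

lemma diagEstimator_eq_sum_diagMonomial {M d : ℕ} (a : (Fin (M + 1) → Fin d) → ℝ) {Ω : Type*}
    (g : Fin M → Fin d → Ω → ℝ) (i : Fin d) :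
    diagEstimator a g i = fun ω => ∑ j, a (Fin.snoc j i) * diagMonomial g j i ω :=
  rfl

section DiagEstimator

variable {M d : ℕ} {Ω : Type*} {mΩ : MeasurableSpace Ω} {μ : Measure Ω}
  (a : (Fin (M + 1) → Fin d) → ℝ) {g : Fin M → Fin d → Ω → ℝ}
  (hg : iIndepFun (fun p : Fin M × Fin d => g p.1 p.2) μ) (mg : ∀ t m, AEMeasurable (g t m) μ)
  (hlaw : ∀ t m, μ.map (g t m) = gaussianReal 0 1) (i : Fin d)
include hg mg hlaw

lemma memLp_diagEstimator : MemLp (diagEstimator a g i) 2 μ :=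
  memLp_finsetSum _ fun j _ => (memLp_diagMonomial hg mg hlaw j i).const_mul _

lemma integral_diagEstimator_s5 : ∫ ω, diagEstimator a g i ω ∂μ = a fun _ => i := by
  have := hg.isProbabilityMeasure
  rw [diagEstimator_eq_sum_diagMonomial, integral_finsetSum _ fun j _ =>
    ((memLp_diagMonomial hg mg hlaw j i).integrable one_le_two).const_mul _]
  simp [integral_const_mul, integral_diagMonomial hg mg hlaw, Fin.snoc_const]

lemma integral_diagEstimator_sq : ∫ ω, diagEstimator a g i ω ^ 2 ∂μ
    = ∑ j : Fin M → Fin d, a (Fin.snoc j i) ^ 2 * 3 ^ #{t | j t = i} :=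
  integral_sq_sum_eq_of_integral_mul_eq_ite _ _ _
    (fun j k => integrable_diagMonomial_mul hg mg hlaw j k i)
    (fun j k => integral_diagMonomial_mul hg mg hlaw j k i)

end DiagEstimator

theorem diag_estimator_variance_gaussian_general
    {M d : ℕ}
    (a : (Fin (M + 1) → Fin d) → ℝ)
    {Ω : Type*} [MeasureSpace Ω] [IsProbabilityMeasure (ℙ : Measure Ω)]
    (g : Fin M → Fin d → Ω → ℝ)
    (hmeas : ∀ n i, Measurable (g n i))
    (hindep : iIndepFun (fun p : Fin M × Fin d => g p.1 p.2) ℙ)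
    (hdist : ∀ n i, Measure.map (g n i) ℙ = gaussianReal 0 1)
    (i : Fin d) :
    variance (diagEstimator a g i) ℙ =
      (∑ s ∈ Finset.range (M + 1), (3 : ℝ) ^ s *
        (∑ j ∈ Finset.univ.filter (fun j : Fin M → Fin d =>
          (Finset.univ.filter (fun t => j t = i)).card = s), (a (Fin.snoc j i)) ^ 2)) -
      (a (fun _ => i)) ^ 2 := by
  have hmeas_ae : ∀ n i, AEMeasurable (g n i) ℙ := fun n i => (hmeas n i).aemeasurable
  rw [variance_eq_sub (memLp_diagEstimator a hindep hmeas_ae hdist i)]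
  simp only [Pi.pow_apply]
  rw [integral_diagEstimator_sq a hindep hmeas_ae hdist i,
    integral_diagEstimator_s5 a hindep hmeas_ae hdist i,
    sum_mul_pow_eq_sum_range_pow_mul_sum_fiber _ _ _ fun j =>
      (card_le_univ _).trans_eq (Fintype.card_fin M)]

theorem diag_estimator_variance_gaussian
    {M d : ℕ} (hM : 1 ≤ M) (hd : 1 ≤ d)
    (a : (Fin (M + 1) → Fin d) → ℝ)
    {Ω : Type*} [MeasureSpace Ω] [IsProbabilityMeasure (ℙ : Measure Ω)]
    (g : Fin M → Fin d → Ω → ℝ)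
    (hmeas : ∀ n i, Measurable (g n i))
    (hindep : iIndepFun (fun p : Fin M × Fin d => g p.1 p.2) ℙ)
    (hdist : ∀ n i, Measure.map (g n i) ℙ = gaussianReal 0 1)
    (i : Fin d) :
    variance (diagEstimator a g i) ℙ =
      (∑ s ∈ Finset.range (M + 1), (3 : ℝ) ^ s *
        (∑ j ∈ Finset.univ.filter (fun j : Fin M → Fin d =>
          (Finset.univ.filter (fun t => j t = i)).card = s), (a (Fin.snoc j i)) ^ 2)) -
      (a (fun _ => i)) ^ 2 :=
  diag_estimator_variance_gaussian_general a g hmeas hindep hdist i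
end

section
/- Let Y_1, …, Y_{rs} be i.i.d. real-valued random variables with mean μ and finite variance σ². Partition them into r disjoint groups of size s, compute the empirical mean of each group, and let μ_MM be the median of these r group means. Then for any δ ∈ (0,1), if r ≥ 8·log(1/δ), then Pr(|μ_MM − μ| ≤ σ·√(4/s)) ≥ 1 − δ. -/
/-!
Each block mean has variance `σ² / s`, so by Chebyshev it misses `[μ - 2σ/√s, μ + 2σ/√s]` with
probability at most `1/4`, independently across blocks. The median can only miss this interval
if at least half of the `r` block means do, and a Chernoff bound (with the exponential moment
taken at `log 3`) makes that happen with probability at most `(√3/2)^r ≤ exp (-r/8) ≤ δ`.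
-/

open MeasureTheory ProbabilityTheory Finset

/-- The median of a finite family of reals (an element in position `(r-1)/2` of the
sorted list of values). -/
noncomputable def medianFn {r : ℕ} (v : Fin r → ℝ) : ℝ :=
  ((List.ofFn v).mergeSort (fun x y => x ≤ y)).getD ((r - 1) / 2) 0

namespace List

variable {α : Type*} {R : α → α → Prop} {l : List α} {p : α → Bool} {i : ℕ}

theorem Pairwise.length_sub_le_countP (hl : l.Pairwise R) (hp : ∀ x y, R x y → p x → p y)
    (hi : i < l.length) (h : p l[i]) : l.length - i ≤ l.countP p := by
  have hdrop : ∀ x ∈ l.drop i, p x := by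
    have hpair := hl.sublist (drop_sublist i l)
    rw [drop_eq_getElem_cons hi, pairwise_cons] at hpair
    rw [drop_eq_getElem_cons hi]
    rintro x (_ | ⟨_, hx⟩)
    exacts [h, hp _ _ (hpair.1 x hx) h]
  calc l.length - i = (l.drop i).countP p := by rw [countP_eq_length.2 hdrop, length_drop]
    _ ≤ l.countP p := (drop_sublist i l).countP_le

theorem Pairwise.succ_le_countP (hl : l.Pairwise R) (hp : ∀ x y, R x y → p y → p x)
    (hi : i < l.length) (h : p l[i]) : i + 1 ≤ l.countP p := by
  have htake : ∀ x ∈ l.take (i + 1), p x := by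
    have hpair := hl.sublist (take_sublist (i + 1) l)
    rw [← take_concat_get' l i hi, pairwise_append] at hpair
    rw [← take_concat_get' l i hi]
    intro x hx
    rcases mem_append.1 hx with hx | hx
    · exact hp _ _ (hpair.2.2 x hx _ (mem_singleton_self _)) h
    · rwa [mem_singleton.1 hx]
  calc i + 1 = (l.take (i + 1)).countP p := by
        rw [countP_eq_length.2 htake, length_take, min_eq_left hi]
    _ ≤ l.countP p := (take_sublist _ l).countP_le

end List

section Median

variable {r : ℕ} (v : Fin r → ℝ)

theorem card_filter_eq_countP_mergeSort (q : ℝ → Prop) [DecidablePred q] :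
    #{k | q (v k)} = ((List.ofFn v).mergeSort (fun x y => x ≤ y)).countP (fun x => q x) := by
  rw [(List.mergeSort_perm _ _).countP_eq, List.ofFn_eq_map, List.countP_map, card_def,
    filter_val, show (univ : Finset (Fin r)).val = List.finRange r from rfl, Multiset.filter_coe,
    Multiset.coe_card, List.countP_eq_length_filter]
  rfl

theorem pairwise_mergeSort_le :
    ((List.ofFn v).mergeSort (fun x y => x ≤ y)).Pairwise (· ≤ ·) := by
  simpa using List.pairwise_mergeSort (le := fun x y : ℝ => decide (x ≤ y))
    (fun a b c hab hbc => by simp only [decide_eq_true_eq] at *; exact hab.trans hbc)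
    (fun a b => by simpa using le_total a b) (List.ofFn v)

theorem medianFn_eq_getElem (hr : 0 < r) :
    medianFn v = ((List.ofFn v).mergeSort (fun x y => x ≤ y))[(r - 1) / 2]'
      (by rw [List.length_mergeSort, List.length_ofFn]; omega) :=
  List.getD_eq_getElem _ _ _

theorem le_two_mul_card_lt_of_lt_medianFn {a : ℝ} (h : a < medianFn v) :
    r ≤ 2 * #{k | a < v k} := by
  rcases Nat.eq_zero_or_pos r with rfl | hr
  · exact Nat.zero_le _
  rw [medianFn_eq_getElem v hr] at h
  have := (pairwise_mergeSort_le v).length_sub_le_countP (p := fun x => decide (a < x))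
    (fun x y hxy hx => by simp only [decide_eq_true_eq] at *; exact hx.trans_le hxy) _
    (by simpa using h)
  rw [List.length_mergeSort, List.length_ofFn, ← card_filter_eq_countP_mergeSort] at this
  omega

theorem le_two_mul_card_gt_of_medianFn_lt {a : ℝ} (h : medianFn v < a) :
    r ≤ 2 * #{k | v k < a} := by
  rcases Nat.eq_zero_or_pos r with rfl | hr
  · exact Nat.zero_le _
  rw [medianFn_eq_getElem v hr] at h
  have := (pairwise_mergeSort_le v).succ_le_countP (p := fun x => decide (x < a))
    (fun x y hxy hy => by simp only [decide_eq_true_eq] at *; exact hxy.trans_lt hy) _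
    (by simpa using h)
  rw [← card_filter_eq_countP_mergeSort] at this
  omega

theorem le_two_mul_card_of_lt_abs_medianFn_sub {c ε : ℝ} (h : ε < |medianFn v - c|) :
    r ≤ 2 * #{k | ε < |v k - c|} := by
  rcases lt_abs.1 h with h | h
  · refine (le_two_mul_card_lt_of_lt_medianFn v (a := c + ε) (by linarith)).trans ?_
    refine Nat.mul_le_mul_left 2 (card_le_card fun k => ?_)
    simp only [mem_filter, mem_univ, true_and]
    exact fun hk => (lt_sub_iff_add_lt'.2 hk).trans_le (le_abs_self _)
  · refine (le_two_mul_card_gt_of_medianFn_lt v (a := c - ε) (by linarith)).trans ?_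
    refine Nat.mul_le_mul_left 2 (card_le_card fun k => ?_)
    simp only [mem_filter, mem_univ, true_and]
    exact fun hk => (lt_sub_comm.1 hk).trans_le (abs_sub_comm (v k) c ▸ le_abs_self _)

theorem setOf_lt_abs_medianFn_sub_subset {Ω : Type*} (Z : Fin r → Ω → ℝ) (c ε : ℝ) :
    {ω | ε < |medianFn (fun k => Z k ω) - c|} ⊆
      {ω | (r : ℝ) / 2 ≤ ∑ k, {ω | ε < |Z k ω - c|}.indicator 1 ω} := by
  intro ω hω
  have hhalf : (r : ℝ) ≤ 2 * #{k | ε < |Z k ω - c|} := by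
    exact_mod_cast le_two_mul_card_of_lt_abs_medianFn_sub _ hω
  have hcount : ∑ k, {ω | ε < |Z k ω - c|}.indicator 1 ω = (#{k | ε < |Z k ω - c|} : ℝ) := by
    simp [Set.indicator_apply]
  change (r : ℝ) / 2 ≤ _
  linarith

end Median

theorem Set.exp_mul_indicator_one {α : Type*} (A : Set α) (t : ℝ) :
    (fun x => Real.exp (t * A.indicator 1 x)) =
      fun x => 1 + A.indicator (fun _ => Real.exp t - 1) x := by
  ext x
  by_cases hx : x ∈ A <;> simp [hx]

namespace ProbabilityTheory

variable {Ω : Type*} [MeasurableSpace Ω] {P : Measure Ω}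

theorem iIndepFun.curry {ι κ 𝓧 : Type*} [MeasurableSpace 𝓧] {X : ι × κ → Ω → 𝓧}
    (mX : ∀ p, Measurable (X p)) (h : iIndepFun X P) :
    iIndepFun (fun i ω j => X (i, j) ω) P := by
  have := h.isProbabilityMeasure
  have : ∀ p, IsProbabilityMeasure (P.map (X p)) :=
    fun p ↦ Measure.isProbabilityMeasure_map (mX p).aemeasurable
  have hblock (i : ι) :
      P.map (fun ω j => X (i, j) ω) = Measure.infinitePi fun j => P.map (X (i, j)) :=
    (h.precomp (Prod.mk_right_injective i)).map_fun_eq_infinitePi_map fun j => mX _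
  have hcurry : (fun ω i j => X (i, j) ω) = MeasurableEquiv.curry ι κ 𝓧 ∘ fun ω p => X p ω := rfl
  rw [iIndepFun_iff_map_fun_eq_infinitePi_map (by fun_prop), hcurry,
    ← Measure.map_map (by fun_prop) (by fun_prop), h.map_fun_eq_infinitePi_map mX,
    Measure.infinitePi_map_curry (fun i j => P.map (X (i, j)))]
  simp_rw [hblock]

theorem iIndepFun.iIndepSet_preimage {ι : Type*} {β : ι → Type*} {mβ : ∀ i, MeasurableSpace (β i)}
    {f : ∀ i, Ω → β i} (h : iIndepFun f P) (hf : ∀ i, Measurable (f i)) {S : ∀ i, Set (β i)}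
    (hS : ∀ i, MeasurableSet (S i)) : iIndepSet (fun i => f i ⁻¹' S i) P :=
  (iIndepSet_iff_meas_biInter fun i => hf i (hS i)).2 fun _ =>
    h.meas_biInter fun i _ => ⟨S i, hS i, rfl⟩

theorem measure_lt_abs_sub_integral_le [IsFiniteMeasure P] {X : Ω → ℝ} (hX : MemLp X 2 P)
    {c q : ℝ} (hc : 0 ≤ c) (hvar : variance X P ≤ q * c ^ 2) :
    P {ω | c < |X ω - P[X]|} ≤ ENNReal.ofReal q := by
  rcases hc.eq_or_lt with rfl | hc
  · have hconst : X =ᵐ[P] fun _ => P[X] := by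
      rw [← evariance_eq_zero_iff hX.aestronglyMeasurable.aemeasurable, ← hX.ofReal_variance_eq,
        le_antisymm (by simpa using hvar) (variance_nonneg X P), ENNReal.ofReal_zero]
    refine le_of_eq_of_le (measure_eq_zero_iff_ae_notMem.2 ?_) zero_le
    filter_upwards [hconst] with ω hω
    simp [hω]
  calc P {ω | c < |X ω - P[X]|} ≤ P {ω | c ≤ |X ω - P[X]|} :=
        measure_mono fun ω (hω : c < _) => hω.le
    _ ≤ ENNReal.ofReal (variance X P / c ^ 2) := meas_ge_le_variance_div_sq hX hc
    _ ≤ ENNReal.ofReal q := ENNReal.ofReal_le_ofReal ((div_le_iff₀ (by positivity)).2 hvar)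

theorem one_sub_measureReal_le_of_compl_subset [IsProbabilityMeasure P] {s t : Set Ω}
    (hst : sᶜ ⊆ t) : 1 - P.real t ≤ P.real s := by
  have := measureReal_union_le (μ := P) s sᶜ
  rw [Set.union_compl_self, probReal_univ] at this
  linarith [measureReal_mono (μ := P) hst]

theorem mgf_indicator_one [IsProbabilityMeasure P] {A : Set Ω} (hA : MeasurableSet A) (t : ℝ) :
    mgf (A.indicator 1) P t = 1 + (Real.exp t - 1) * P.real A := by
  rw [mgf, A.exp_mul_indicator_one,
    integral_add (integrable_const 1) ((integrable_const _).indicator hA),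
    integral_const, integral_indicator_const _ hA]
  simp [mul_comm]

theorem measureReal_card_div_two_le_sum_indicator_le {ι : Type*} [Fintype ι] {A : ι → Set Ω}
    (hA : iIndepSet A P) (hmeas : ∀ i, MeasurableSet (A i)) (hp : ∀ i, P.real (A i) ≤ 1 / 4) :
    P.real {ω | (Fintype.card ι : ℝ) / 2 ≤ ∑ i, (A i).indicator 1 ω} ≤
      Real.exp (-(Fintype.card ι / 8)) := by
  have := hA.isProbabilityMeasure
  set t := Real.log 3
  have hX : iIndepFun (fun i => (A i).indicator (1 : Ω → ℝ)) P := hA.iIndepFun_indicator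
  have hXmeas (i : ι) : Measurable ((A i).indicator (1 : Ω → ℝ)) :=
    measurable_const.indicator (hmeas i)
  have hXint (i : ι) : Integrable (fun ω => Real.exp (t * (A i).indicator 1 ω)) P := by
    rw [Set.exp_mul_indicator_one]
    exact (integrable_const 1).add ((integrable_const _).indicator (hmeas i))
  have hmgf (i : ι) : mgf ((A i).indicator 1) P t ≤ 3 / 2 := by
    rw [mgf_indicator_one (hmeas i), Real.exp_log (by norm_num)]
    linarith [hp i]
  -- `exp (-t / 2) * (3 / 2) = √3 / 2`, and `log (3 / 4) ≤ -1 / 4`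
  have hbase : Real.exp (-t / 2) * (3 / 2) ≤ Real.exp (-(1 / 8)) := by
    have hlog : Real.log (3 / 4) ≤ 3 / 4 - 1 := Real.log_le_sub_one_of_pos (by norm_num)
    rw [show (3 / 2 : ℝ) = Real.exp (Real.log (3 / 2)) from (Real.exp_log (by norm_num)).symm,
      ← Real.exp_add, Real.exp_le_exp]
    rw [Real.log_div (by norm_num) (by norm_num)] at hlog ⊢
    rw [show (4 : ℝ) = 2 ^ 2 by norm_num, Real.log_pow] at hlog
    push_cast at hlog
    linarith
  calc P.real {ω | (Fintype.card ι : ℝ) / 2 ≤ ∑ i, (A i).indicator 1 ω}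
      = P.real {ω | (Fintype.card ι : ℝ) / 2 ≤ (∑ i, (A i).indicator 1) ω} := by
        simp only [Finset.sum_apply]
    _ ≤ Real.exp (-t * (Fintype.card ι / 2)) * mgf (∑ i, (A i).indicator 1) P t :=
        measure_ge_le_exp_mul_mgf _ (Real.log_nonneg (by norm_num))
          (hX.integrable_exp_mul_sum hXmeas fun i _ => hXint i)
    _ = Real.exp (-t / 2) ^ Fintype.card ι * ∏ i, mgf ((A i).indicator 1) P t := by
        rw [hX.mgf_sum hXmeas, ← Real.exp_nat_mul]
        ring_nf
    _ ≤ Real.exp (-t / 2) ^ Fintype.card ι * (3 / 2) ^ Fintype.card ι := by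
        gcongr
        exact (prod_le_prod (fun i _ => mgf_nonneg) fun i _ => hmgf i).trans_eq (by simp [div_pow])
    _ ≤ Real.exp (-(1 / 8)) ^ Fintype.card ι := by
        rw [← mul_pow]; gcongr
    _ = Real.exp (-(Fintype.card ι / 8)) := by
        rw [← Real.exp_nat_mul]; ring_nf

end ProbabilityTheory

noncomputable def sampleMean {n : ℕ} (y : Fin n → ℝ) : ℝ := 1 / n * ∑ t, y t

theorem measurable_sampleMean {n : ℕ} : Measurable (sampleMean : (Fin n → ℝ) → ℝ) := by
  unfold sampleMean
  fun_prop

section SampleMean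

variable {Ω : Type*} [MeasurableSpace Ω] {P : Measure Ω} {n : ℕ} {X : Fin n → Ω → ℝ}

theorem memLp_sampleMean {p : ENNReal} (hX : ∀ t, MemLp (X t) p P) :
    MemLp (fun ω => sampleMean fun t => X t ω) p P :=
  (memLp_finsetSum univ fun t _ => hX t).const_mul _

theorem integral_sampleMean (hn : n ≠ 0) (hX : ∀ t, Integrable (X t) P) {m : ℝ}
    (hm : ∀ t, ∫ ω, X t ω ∂P = m) : ∫ ω, (sampleMean fun t => X t ω) ∂P = m := by
  simp only [sampleMean]
  rw [integral_const_mul, integral_finsetSum univ fun t _ => hX t]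
  simp [hm]
  field_simp

theorem variance_sampleMean (hX : ∀ t, MemLp (X t) 2 P)
    (hindep : Pairwise fun t t' => X t ⟂ᵢ[P] X t') {v : ℝ} (hv : ∀ t, variance (X t) P = v) :
    variance (fun ω => sampleMean fun t => X t ω) P = v / n := by
  have hsum : variance (fun ω => ∑ t, X t ω) P = n * v := by
    have := IndepFun.variance_sum (s := univ) (fun t _ => hX t) fun t _ t' _ h => hindep h
    rw [Finset.sum_fn] at this
    simp [this, hv]
  simp only [sampleMean]
  rw [variance_const_mul, hsum]
  rcases eq_or_ne n 0 with rfl | hn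
  · simp
  · field_simp

theorem measureReal_lt_abs_sampleMean_sub_le [IsFiniteMeasure P] (hn : n ≠ 0)
    (hX : ∀ t, MemLp (X t) 2 P) (hindep : Pairwise fun t t' => X t ⟂ᵢ[P] X t') {m σ : ℝ}
    (hσ : 0 ≤ σ) (hm : ∀ t, ∫ ω, X t ω ∂P = m) (hv : ∀ t, variance (X t) P = σ ^ 2) :
    P.real {ω | σ * √(4 / n) < |(sampleMean fun t => X t ω) - m|} ≤ 1 / 4 := by
  have hvar : variance (fun ω => sampleMean fun t => X t ω) P ≤ 1 / 4 * (σ * √(4 / n)) ^ 2 := by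
    rw [variance_sampleMean hX hindep hv, mul_pow, Real.sq_sqrt (by positivity)]
    field_simp
    rfl
  have := measure_lt_abs_sub_integral_le (memLp_sampleMean hX) (by positivity) hvar
  rw [integral_sampleMean hn (fun t => (hX t).integrable one_le_two) hm] at this
  exact ENNReal.toReal_le_of_le_ofReal (by norm_num) this

end SampleMean

theorem median_of_means_general
    {Ω : Type*} [MeasureSpace Ω] [IsProbabilityMeasure (ℙ : Measure Ω)]
    (r s : ℕ) (hs : 1 ≤ s)
    (Y : Fin r × Fin s → Ω → ℝ)
    (hmeas : ∀ p, Measurable (Y p))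
    (hindep : iIndepFun Y ℙ)
    (hL2 : ∀ p, MemLp (Y p) 2 ℙ)
    (μ σ : ℝ) (hσ : 0 ≤ σ)
    (hmean : ∀ p, ∫ ω, Y p ω ∂ℙ = μ)
    (hvar : ∀ p, variance (Y p) ℙ = σ ^ 2)
    (δ : ℝ) (hδ0 : 0 < δ)
    (hr : 8 * Real.log (1 / δ) ≤ (r : ℝ)) :
    (1 : ℝ) - δ ≤
      (ℙ {ω | |medianFn (fun k : Fin r => (1 / (s : ℝ)) * ∑ t : Fin s, Y (k, t) ω) - μ| ≤
        σ * Real.sqrt (4 / (s : ℝ))}).toReal := by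
  set ε := σ * √(4 / s)
  set good := {ω | |medianFn (fun k => sampleMean fun t => Y (k, t) ω) - μ| ≤ ε}
  set A : Fin r → Set Ω := fun k => (fun ω t => Y (k, t) ω) ⁻¹' {y | ε < |sampleMean y - μ|}
  have hblock (k : Fin r) : Measurable fun ω t => Y (k, t) ω :=
    measurable_pi_lambda _ fun t => hmeas _
  have hS : MeasurableSet {y : Fin s → ℝ | ε < |sampleMean y - μ|} :=
    measurableSet_lt measurable_const (measurable_sampleMean.sub_const μ).abs
  have hA : iIndepSet A ℙ := (hindep.curry hmeas).iIndepSet_preimage hblock fun _ => hS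
  have hAle (k : Fin r) : (ℙ).real (A k) ≤ 1 / 4 :=
    measureReal_lt_abs_sampleMean_sub_le (by omega) (fun t => hL2 _)
      (fun t t' h => hindep.indepFun ((Prod.mk_right_injective k).ne h)) hσ (fun t => hmean _)
      fun t => hvar _
  have hbad : goodᶜ ⊆ {ω | (r : ℝ) / 2 ≤ ∑ k, (A k).indicator 1 ω} := fun ω (hω : ¬_ ≤ ε) =>
    setOf_lt_abs_medianFn_sub_subset (fun k ω => sampleMean fun t => Y (k, t) ω) μ ε (not_le.1 hω)
  have hδ : Real.exp (-(r / 8)) ≤ δ := by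
    rw [one_div, Real.log_inv] at hr
    calc Real.exp (-(r / 8)) ≤ Real.exp (Real.log δ) := Real.exp_le_exp.2 (by linarith)
      _ = δ := Real.exp_log hδ0
  have hbad_le := measureReal_card_div_two_le_sum_indicator_le hA (fun k => hblock k hS) hAle
  rw [Fintype.card_fin] at hbad_le
  exact (sub_le_sub_left (hbad_le.trans hδ) 1).trans (one_sub_measureReal_le_of_compl_subset hbad)

theorem median_of_means
    {Ω : Type*} [MeasureSpace Ω] [IsProbabilityMeasure (ℙ : Measure Ω)]
    (r s : ℕ) (hs : 1 ≤ s)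
    (Y : Fin r × Fin s → Ω → ℝ)
    (hmeas : ∀ p, Measurable (Y p))
    (hindep : iIndepFun Y ℙ)
    (hident : ∀ p q, IdentDistrib (Y p) (Y q) ℙ ℙ)
    (hL2 : ∀ p, MemLp (Y p) 2 ℙ)
    (μ σ : ℝ) (hσ : 0 ≤ σ)
    (hmean : ∀ p, ∫ ω, Y p ω ∂ℙ = μ)
    (hvar : ∀ p, variance (Y p) ℙ = σ ^ 2)
    (δ : ℝ) (hδ0 : 0 < δ) (hδ1 : δ < 1)
    (hr : 8 * Real.log (1 / δ) ≤ (r : ℝ)) :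
    (1 : ℝ) - δ ≤
      (ℙ {ω | |medianFn (fun k : Fin r => (1 / (s : ℝ)) * ∑ t : Fin s, Y (k, t) ω) - μ| ≤
        σ * Real.sqrt (4 / (s : ℝ))}).toReal :=
  median_of_means_general r s hs Y hmeas hindep hL2 μ σ hσ hmean hvar δ hδ0 hr
end

section
/- If the entries g^{(n)}_i are i.i.d. Rademacher, then the variance of the trace estimator equals Var(X) = ‖A‖_F² − tr(A)² + 2·Σ_{1 ≤ q < p ≤ d} Σ a_{j_1,…,j_{N−1},p} · a_{k_1,…,k_{N−1},q}, where for each pair p > q the inner sum ranges over all pairs of tuples (j_1,…,j_{N−1}), (k_1,…,k_{N−1}) with every j_t and every k_t in {p,q} and j_t ≠ k_t for all t ∈ {1,…,N−1}. -/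
/-!
Expanding the products, `X = ∑_{(j,i)} a_{j,i} ∏_{t,x} (g^{(t)}_x)^{e_{(j,i)}(t,x)}` is a linear
combination of monomials in independent Rademacher variables, and such a monomial has expectation
`1` if all its exponents are even and `0` otherwise. Hence `E[X] = tr A`, and `E[X²]` is the sum of
`a_{j,i} a_{k,q}` over the pairs of indices whose monomials multiply to an even one, i.e. for which
every multiset `{j_t, i, k_t, q}` splits into two equal pairs. For `i = q` this means `j = k`, which
gives `‖A‖_F²`; for `i ≠ q` it means `{j_t, k_t} = {i, q}` for all `t`, which gives the cross terms,
symmetric in `(i, q)`.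
-/

open MeasureTheory ProbabilityTheory Finset

/-- The trace estimator `X = Σ_i y_i`. -/
noncomputable def traceEstimator {M d : ℕ} (a : (Fin (M + 1) → Fin d) → ℝ)
    {Ω : Type*} (g : Fin M → Fin d → Ω → ℝ) (ω : Ω) : ℝ :=
  ∑ i : Fin d, diagEstimator a g i ω

/-- The Rademacher distribution: uniform on `{-1, +1}`. -/
noncomputable def radMeasure : Measure ℝ :=
  (2 : ENNReal)⁻¹ • Measure.dirac 1 + (2 : ENNReal)⁻¹ • Measure.dirac (-1)

lemma ae_abs_eq_one_radMeasure : ∀ᵐ x ∂radMeasure, |x| = 1 := by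
  simp [radMeasure, ae_add_measure_iff]

lemma integral_pow_radMeasure (n : ℕ) :
    ∫ x, x ^ n ∂radMeasure = if Even n then 1 else 0 := by
  rw [radMeasure, integral_add_measure, integral_smul_measure, integral_smul_measure,
    integral_dirac, integral_dirac]
  · rcases Nat.even_or_odd n with h | h <;> simp [h, h.neg_one_pow]; norm_num
  all_goals exact (integrable_dirac (by simp)).smul_measure (by simp)

section RademacherMonomial

variable {Ω ι κ : Type*} [MeasurableSpace Ω] {μ : Measure Ω} [Fintype ι] [Fintype κ]
  {X : ι → Ω → ℝ}

lemma memLp_prod_pow_of_map_eq_radMeasure [IsFiniteMeasure μ]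
    (hmeas : ∀ i, AEMeasurable (X i) μ) (hdist : ∀ i, μ.map (X i) = radMeasure)
    (c : ι → ℕ) (p : ENNReal) : MemLp (fun ω => ∏ i, X i ω ^ c i) p μ := by
  refine .of_bound (by fun_prop) 1 ?_
  have habs : ∀ i, ∀ᵐ ω ∂μ, |X i ω| = 1 := fun i =>
    ae_of_ae_map (hmeas i) (by rw [hdist i]; exact ae_abs_eq_one_radMeasure)
  filter_upwards [ae_all_iff.mpr habs] with ω hω
  simp [hω]

lemma integral_prod_pow_of_iIndepFun_radMeasure (hX : iIndepFun X μ)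
    (hmeas : ∀ i, AEMeasurable (X i) μ) (hdist : ∀ i, μ.map (X i) = radMeasure) (c : ι → ℕ) :
    ∫ ω, ∏ i, X i ω ^ c i ∂μ = if ∀ i, Even (c i) then 1 else 0 := by
  rw [hX.integral_fun_prod_comp hmeas (f := fun i x => x ^ c i) (fun i => by fun_prop),
    ← Fintype.prod_boole]
  refine Finset.prod_congr rfl fun i _ => ?_
  rw [← integral_pow_radMeasure, ← hdist i, integral_map (hmeas i) (by fun_prop)]

lemma integral_sum_mul_prod_pow_of_iIndepFun_radMeasure [IsFiniteMeasure μ]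
    (hX : iIndepFun X μ) (hmeas : ∀ i, AEMeasurable (X i) μ)
    (hdist : ∀ i, μ.map (X i) = radMeasure) (b : κ → ℝ) (e : κ → ι → ℕ) :
    ∫ ω, ∑ k, b k * ∏ i, X i ω ^ e k i ∂μ = ∑ k, b k * if ∀ i, Even (e k i) then 1 else 0 := by
  rw [integral_finsetSum _ fun k _ =>
    ((memLp_prod_pow_of_map_eq_radMeasure hmeas hdist (e k) 1).integrable le_rfl).const_mul _]
  simp only [integral_const_mul, integral_prod_pow_of_iIndepFun_radMeasure hX hmeas hdist]

lemma variance_sum_mul_prod_pow_of_iIndepFun_radMeasure [IsProbabilityMeasure μ]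
    (hX : iIndepFun X μ) (hmeas : ∀ i, AEMeasurable (X i) μ)
    (hdist : ∀ i, μ.map (X i) = radMeasure) (b : κ → ℝ) (e : κ → ι → ℕ) :
    variance (fun ω => ∑ k, b k * ∏ i, X i ω ^ e k i) μ =
      ∑ k, ∑ l, b k * b l * (if ∀ i, Even (e k i + e l i) then 1 else 0) -
        (∑ k, b k * if ∀ i, Even (e k i) then 1 else 0) ^ 2 := by
  have hsq : (fun ω => ∑ k, b k * ∏ i, X i ω ^ e k i) ^ 2 =
      fun ω => ∑ kl : κ × κ, b kl.1 * b kl.2 * ∏ i, X i ω ^ (e kl.1 i + e kl.2 i) := by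
    ext ω
    simp only [Pi.pow_apply, sq, Finset.sum_mul_sum, Fintype.sum_prod_type, pow_add,
      Finset.prod_mul_distrib]
    exact Finset.sum_congr rfl fun k _ => Finset.sum_congr rfl fun l _ => by ring
  rw [variance_eq_sub (memLp_finsetSum _ fun k _ =>
      (memLp_prod_pow_of_map_eq_radMeasure hmeas hdist (e k) 2).const_mul (b k)), hsq,
    integral_sum_mul_prod_pow_of_iIndepFun_radMeasure hX hmeas hdist,
    integral_sum_mul_prod_pow_of_iIndepFun_radMeasure hX hmeas hdist,
    Fintype.sum_prod_type]

end RademacherMonomial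

lemma sum_sum_eq_sum_add_two_mul_sum_sum_Iio {ι R : Type*} [Fintype ι] [LinearOrder ι]
    [LocallyFiniteOrderBot ι] [LocallyFiniteOrderTop ι] [CommSemiring R] {f : ι → ι → R}
    (hf : ∀ i j, f i j = f j i) :
    ∑ i, ∑ j, f i j = ∑ i, f i i + 2 * ∑ i, ∑ j ∈ Iio i, f i j := by
  have hsplit (i : ι) : ∑ j, f i j = f i i + (∑ j ∈ Iio i, f i j + ∑ j ∈ Ioi i, f i j) := by
    rw [← Finset.sum_union (Finset.disjoint_left.mpr fun j hj hj' =>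
        (mem_Iio.mp hj).not_gt (mem_Ioi.mp hj')), ← Finset.add_sum_erase _ _ (mem_univ i)]
    congr 1
    apply Finset.sum_congr _ fun _ _ => rfl
    ext j
    simp only [mem_erase, mem_univ, and_true, mem_union, mem_Iio, mem_Ioi]
    exact ne_iff_lt_or_gt
  have hswap : ∑ i, ∑ j ∈ Ioi i, f i j = ∑ i, ∑ j ∈ Iio i, f i j := by
    rw [Finset.sum_comm' (t' := univ) (s' := fun j => Iio j) (fun i j => by simp)]
    exact Finset.sum_congr rfl fun i _ => Finset.sum_congr rfl fun j _ => hf j i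
  simp only [hsplit, Finset.sum_add_distrib, hswap]
  ring

section TraceExponent

variable {M d : ℕ}

/-- The exponent of `g t x` in the monomial `∏ t, g t (j t) * g t i` indexed by `z = (j, i)`. -/
def traceExponent (z : (Fin M → Fin d) × Fin d) (p : Fin M × Fin d) : ℕ :=
  (if z.1 p.1 = p.2 then 1 else 0) + (if z.2 = p.2 then 1 else 0)

lemma traceEstimator_eq_sum_mul_prod_pow {Ω : Type*} (a : (Fin (M + 1) → Fin d) → ℝ)
    (g : Fin M → Fin d → Ω → ℝ) :
    traceEstimator a g = fun ω =>
      ∑ z : (Fin M → Fin d) × Fin d,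
        a (Fin.snoc z.1 z.2) * ∏ p, g p.1 p.2 ω ^ traceExponent z p := by
  ext ω
  unfold traceEstimator diagEstimator
  rw [Fintype.sum_prod_type_right]
  refine Finset.sum_congr rfl fun i _ => Finset.sum_congr rfl fun j _ => ?_
  simp only [traceExponent, Fintype.prod_prod_type, pow_add, Finset.prod_mul_distrib, pow_ite,
    pow_one, pow_zero, Finset.prod_ite_eq, Finset.mem_univ, if_true]

lemma even_traceExponent_iff (z : (Fin M → Fin d) × Fin d) (p : Fin M × Fin d) :
    Even (traceExponent z p) ↔ (z.1 p.1 = p.2 ↔ z.2 = p.2) := by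
  by_cases h1 : z.1 p.1 = p.2 <;> by_cases h2 : z.2 = p.2 <;> simp [traceExponent, h1, h2]

lemma forall_even_traceExponent_iff (z : (Fin M → Fin d) × Fin d) :
    (∀ p, Even (traceExponent z p)) ↔ z.1 = fun _ => z.2 := by
  simp only [even_traceExponent_iff, Prod.forall, funext_iff]
  exact forall_congr' fun t => ⟨fun h => ((h _).mp rfl).symm, fun h x => by rw [h]⟩

lemma forall_even_traceExponent_add_iff (z w : (Fin M → Fin d) × Fin d) :
    (∀ p, Even (traceExponent z p + traceExponent w p)) ↔
      ∀ t x, ((z.1 t = x ↔ z.2 = x) ↔ (w.1 t = x ↔ w.2 = x)) := by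
  simp only [Nat.even_add, even_traceExponent_iff, Prod.forall]

lemma forall_even_traceExponent_add_iff_of_eq (j k : Fin M → Fin d) (i : Fin d) :
    (∀ p, Even (traceExponent (j, i) p + traceExponent (k, i) p)) ↔ j = k := by
  rw [forall_even_traceExponent_add_iff, funext_iff]
  refine forall_congr' fun t => ⟨fun h => ?_, fun h x => by simp [h]⟩
  have := h (j t)
  grind

lemma forall_even_traceExponent_add_iff_of_ne (j k : Fin M → Fin d) {i q : Fin d} (hiq : i ≠ q) :
    (∀ p, Even (traceExponent (j, i) p + traceExponent (k, q) p)) ↔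
      ∀ t, (j t = i ∨ j t = q) ∧ (k t = i ∨ k t = q) ∧ j t ≠ k t := by
  rw [forall_even_traceExponent_add_iff]
  refine forall_congr' fun t => ⟨fun h => ?_, fun h x => by grind⟩
  have := h (j t); have := h i; have := h (k t); have := h q
  grind

lemma snoc_const_self (i : Fin d) : Fin.snoc (fun _ : Fin M => i) i = fun _ => i := by
  funext x
  induction x using Fin.lastCases <;> simp

lemma sum_sum_snoc_eq_sum {R : Type*} [AddCommMonoid R] (f : (Fin (M + 1) → Fin d) → R) :
    ∑ i, ∑ j : Fin M → Fin d, f (Fin.snoc j i) = ∑ x, f x := by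
  rw [← Fintype.sum_prod_type']
  exact Fintype.sum_equiv (Fin.snocEquiv fun _ => Fin d) _ _ fun _ => rfl

variable (a : (Fin (M + 1) → Fin d) → ℝ)

lemma sum_mul_ite_forall_even_traceExponent :
    ∑ z : (Fin M → Fin d) × Fin d,
      a (Fin.snoc z.1 z.2) * (if ∀ p, Even (traceExponent z p) then 1 else 0) =
      ∑ i, a (fun _ => i) := by
  simp only [forall_even_traceExponent_iff, Fintype.sum_prod_type_right, mul_ite, mul_one,
    mul_zero, Finset.sum_ite_eq', Finset.mem_univ, if_true, snoc_const_self]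

lemma sum_sum_mul_ite_forall_even_traceExponent_add :
    ∑ z : (Fin M → Fin d) × Fin d, ∑ w : (Fin M → Fin d) × Fin d,
      a (Fin.snoc z.1 z.2) * a (Fin.snoc w.1 w.2) *
        (if ∀ p, Even (traceExponent z p + traceExponent w p) then 1 else 0) =
      ∑ x, a x ^ 2 + 2 * ∑ p : Fin d, ∑ q ∈ Iio p,
        ∑ jk ∈ univ.filter (fun jk : (Fin M → Fin d) × (Fin M → Fin d) =>
          ∀ t, (jk.1 t = p ∨ jk.1 t = q) ∧ (jk.2 t = p ∨ jk.2 t = q) ∧ jk.1 t ≠ jk.2 t),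
        a (Fin.snoc jk.1 p) * a (Fin.snoc jk.2 q) := by
  set F : (Fin M → Fin d) × Fin d → (Fin M → Fin d) × Fin d → ℝ := fun z w =>
    a (Fin.snoc z.1 z.2) * a (Fin.snoc w.1 w.2) *
      (if ∀ p, Even (traceExponent z p + traceExponent w p) then 1 else 0)
  have hF (z w) : F z w = F w z := by
    simp only [F, mul_comm (a (Fin.snoc z.1 z.2)), add_comm (traceExponent z _)]
  have hdiag (i : Fin d) : ∑ j, ∑ k, F (j, i) (k, i) = ∑ j, a (Fin.snoc j i) ^ 2 := by
    simp only [F, forall_even_traceExponent_add_iff_of_eq, mul_ite, mul_one, mul_zero,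
      Finset.sum_ite_eq, Finset.mem_univ, if_true, sq]
  have hoff {i q : Fin d} (hqi : q < i) : ∑ j, ∑ k, F (j, i) (k, q) =
      ∑ jk ∈ univ.filter (fun jk : (Fin M → Fin d) × (Fin M → Fin d) =>
        ∀ t, (jk.1 t = i ∨ jk.1 t = q) ∧ (jk.2 t = i ∨ jk.2 t = q) ∧ jk.1 t ≠ jk.2 t),
      a (Fin.snoc jk.1 i) * a (Fin.snoc jk.2 q) := by
    simp only [F, forall_even_traceExponent_add_iff_of_ne _ _ hqi.ne', mul_ite, mul_one,
      mul_zero, Finset.sum_filter, Fintype.sum_prod_type]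
  calc _ = ∑ i, ∑ q, ∑ j, ∑ k, F (j, i) (k, q) := by
        simp only [Fintype.sum_prod_type_right]
        exact Finset.sum_congr rfl fun i _ => Finset.sum_comm
    _ = ∑ i, ∑ j, ∑ k, F (j, i) (k, i) + 2 * ∑ i, ∑ q ∈ Iio i, ∑ j, ∑ k, F (j, i) (k, q) :=
        sum_sum_eq_sum_add_two_mul_sum_sum_Iio fun i q => by
          rw [Finset.sum_comm]; simp only [hF]
    _ = _ := by
        rw [Finset.sum_congr rfl fun i _ => hdiag i, sum_sum_snoc_eq_sum fun x => a x ^ 2]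
        congr 1
        exact congrArg _ <| Finset.sum_congr rfl fun i _ =>
          Finset.sum_congr rfl fun q hq => hoff (mem_Iio.mp hq)

end TraceExponent

theorem trace_estimator_variance_rademacher_general
    {M d : ℕ}
    (a : (Fin (M + 1) → Fin d) → ℝ)
    {Ω : Type*} [MeasureSpace Ω] [IsProbabilityMeasure (ℙ : Measure Ω)]
    (g : Fin M → Fin d → Ω → ℝ)
    (hmeas : ∀ n i, Measurable (g n i))
    (hindep : iIndepFun (fun p : Fin M × Fin d => g p.1 p.2) ℙ)
    (hdist : ∀ n i, Measure.map (g n i) ℙ = radMeasure)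
    :
    variance (traceEstimator a g) ℙ =
      (∑ x : Fin (M + 1) → Fin d, (a x) ^ 2) - (∑ i : Fin d, a (fun _ => i)) ^ 2 +
      2 * ∑ p : Fin d, ∑ q ∈ Finset.Iio p,
        (∑ jk ∈ Finset.univ.filter (fun jk : (Fin M → Fin d) × (Fin M → Fin d) =>
          ∀ t, (jk.1 t = p ∨ jk.1 t = q) ∧ (jk.2 t = p ∨ jk.2 t = q) ∧ jk.1 t ≠ jk.2 t),
        a (Fin.snoc jk.1 p) * a (Fin.snoc jk.2 q)) := by
  rw [traceEstimator_eq_sum_mul_prod_pow,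
    variance_sum_mul_prod_pow_of_iIndepFun_radMeasure hindep
      (fun p => (hmeas p.1 p.2).aemeasurable) (fun p => hdist p.1 p.2),
    sum_mul_ite_forall_even_traceExponent, sum_sum_mul_ite_forall_even_traceExponent_add]
  ring

theorem trace_estimator_variance_rademacher
    {M d : ℕ} (hM : 1 ≤ M) (hd : 1 ≤ d)
    (a : (Fin (M + 1) → Fin d) → ℝ)
    {Ω : Type*} [MeasureSpace Ω] [IsProbabilityMeasure (ℙ : Measure Ω)]
    (g : Fin M → Fin d → Ω → ℝ)
    (hmeas : ∀ n i, Measurable (g n i))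
    (hindep : iIndepFun (fun p : Fin M × Fin d => g p.1 p.2) ℙ)
    (hdist : ∀ n i, Measure.map (g n i) ℙ = radMeasure)
    :
    variance (traceEstimator a g) ℙ =
      (∑ x : Fin (M + 1) → Fin d, (a x) ^ 2) - (∑ i : Fin d, a (fun _ => i)) ^ 2 +
      2 * ∑ p : Fin d, ∑ q ∈ Finset.Iio p,
        (∑ jk ∈ Finset.univ.filter (fun jk : (Fin M → Fin d) × (Fin M → Fin d) =>
          ∀ t, (jk.1 t = p ∨ jk.1 t = q) ∧ (jk.2 t = p ∨ jk.2 t = q) ∧ jk.1 t ≠ jk.2 t),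
        a (Fin.snoc jk.1 p) * a (Fin.snoc jk.2 q)) :=
  trace_estimator_variance_rademacher_general a g hmeas hindep hdist
end
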